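/- arXiv:1312.3961 — 9 statements merged into one kernel-verified Lean document; each statement's English description precedes it below -/
import Mathlib

section
/- Let N, K be natural numbers with N ≥ 2, K ≥ 1, and let M be a real number with max{(K−N)(N−1)/(K·N) + 1, 1} ≤ M ≤ N. Define R^C_s(M) = K·(1 − (M−1)/(N−1))/(1 + K·(M−1)/(N−1)). Then there exists a natural number s with 1 ≤ s ≤ min{N, K} and ⌊N/s⌋ ≥ 2 such that R^C_s(M) ≤ 17·( s − s·(M−1)/(⌊N/s⌋ − 1) ). -/
set_option maxHeartbeats 1600000 in
/-- Constant-gap theorem for the centralized secure caching scheme: in the regime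
`max{(K-N)(N-1)/(KN) + 1, 1} ≤ M ≤ N`, the achievable rate `R^C_s(M)` is within a
multiplicative factor `17` of the cut-set lower bound `s - s(M-1)/(⌊N/s⌋ - 1)`
for some admissible choice of `s`. -/
theorem centralized_secure_constant_gap (N K : ℕ) (hN : 2 ≤ N) (hK : 1 ≤ K) (M : ℝ)
    (hM1 : max (((K : ℝ) - N) * ((N : ℝ) - 1) / ((K : ℝ) * N) + 1) 1 ≤ M)
    (hM2 : M ≤ N) :
    ∃ s : ℕ, 1 ≤ s ∧ s ≤ min N K ∧ 2 ≤ N / s ∧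
      (K : ℝ) * (1 - (M - 1) / ((N : ℝ) - 1)) / (1 + (K : ℝ) * ((M - 1) / ((N : ℝ) - 1)))
        ≤ 17 * ((s : ℝ) - (s : ℝ) * (M - 1) / (((N / s : ℕ) : ℝ) - 1)) := by
  have hN2 : (2:ℝ) ≤ (N:ℝ) := by exact_mod_cast hN
  have hNR : (0:ℝ) < (N:ℝ) - 1 := by linarith
  have hKR : (1:ℝ) ≤ (K:ℝ) := by exact_mod_cast hK
  have hKpos : (0:ℝ) < (K:ℝ) := by linarith
  set t : ℝ := (M - 1) / ((N:ℝ) - 1) with ht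
  have hM1' : (1:ℝ) ≤ M := le_trans (le_max_right _ _) hM1
  have ht0 : 0 ≤ t := div_nonneg (by linarith) (le_of_lt hNR)
  have ht1 : t ≤ 1 := by rw [ht, div_le_one hNR]; linarith
  have hMt : M - 1 = t * ((N:ℝ) - 1) := by
    rw [ht]; field_simp
  have htNK' : (K:ℝ) - (N:ℝ) ≤ (K:ℝ)*(N:ℝ)*t := by
    have h := le_trans (le_max_left _ _) hM1
    have h2 : ((K:ℝ) - N) * ((N:ℝ) - 1) / ((K:ℝ)*N) ≤ M - 1 := by linarith
    rw [div_le_iff₀ (by positivity : (0:ℝ) < (K:ℝ)*N), hMt] at h2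
    nlinarith [h2, hNR]
  have hden : (0:ℝ) < 1 + (K:ℝ) * t := by nlinarith
  by_cases hc : (K:ℝ) - 17 ≤ 17*(K:ℝ)*t
  · -- take s = 1
    refine ⟨1, le_refl 1, by omega, by simpa using hN, ?_⟩
    have hd1 : ((N / 1 : ℕ):ℝ) = (N:ℝ) := by rw [Nat.div_one]
    rw [hd1]
    rw [div_le_iff₀ hden]
    have key : (0:ℝ) ≤ (1 - t) * (17 + 17*(K:ℝ)*t - K) :=
      mul_nonneg (by linarith) (by linarith)
    have hcast : ((1:ℕ):ℝ) = (1:ℝ) := by norm_num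
    rw [hcast, one_mul, ← ht]
    nlinarith [key]
  · push_neg at hc
    have h17Kt : (0:ℝ) ≤ 17*(K:ℝ)*t := by positivity
    have hK17 : (17:ℝ) < (K:ℝ) := by linarith
    have hN17 : (17:ℝ) < (N:ℝ) := by
      nlinarith [mul_lt_mul_of_pos_left hc (show (0:ℝ) < (N:ℝ) by linarith), htNK', hKpos]
    have hN18n : 18 ≤ N := by
      have : (17:ℕ) < N := by exact_mod_cast hN17
      omega
    have hN18 : (18:ℝ) ≤ (N:ℝ) := by exact_mod_cast hN18n
    have ht17 : t ≤ 1/17 := by nlinarith [hc, hKpos]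
    set A : ℝ := (K:ℝ)/(1 + (K:ℝ)*t) with hA
    have hA17 : (17:ℝ) < A := by
      rw [hA, lt_div_iff₀ hden]; linarith
    have hApos : (0:ℝ) < A := by linarith
    have hAN : A ≤ (N:ℝ) := by
      rw [hA, div_le_iff₀ hden]; nlinarith [htNK']
    have hAK : A ≤ (K:ℝ) := by
      rw [hA, div_le_iff₀ hden]
      nlinarith [mul_nonneg (mul_nonneg hKpos.le hKpos.le) ht0]
    have htA : t * A ≤ 1 := by
      have e : t * A = (t*(K:ℝ))/(1 + (K:ℝ)*t) := by rw [hA]; ring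
      rw [e, div_le_one hden]
      linarith
    set sN : ℕ := ⌈A/9⌉₊ with hsN
    have hs_lb : A/9 ≤ (sN:ℝ) := Nat.le_ceil _
    have hs_ub : (sN:ℝ) < A/9 + 1 := Nat.ceil_lt_add_one (by positivity)
    have hs1 : 1 ≤ sN := by
      rw [hsN, Nat.one_le_ceil_iff]
      positivity
    have hsK : sN ≤ K := by
      rw [hsN, Nat.ceil_le]
      calc A/9 ≤ (K:ℝ)/9 := by linarith
        _ ≤ (K:ℝ) := by linarith
    have hsNle : sN ≤ N := by
      rw [hsN, Nat.ceil_le]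
      calc A/9 ≤ (N:ℝ)/9 := by linarith
        _ ≤ (N:ℝ) := by linarith
    have hspos : 0 < sN := hs1
    have hspos_r : (0:ℝ) < (sN:ℝ) := by exact_mod_cast hspos
    have h2s : 2 * sN < N := by
      have hr : 2*(sN:ℝ) < (N:ℝ) := by
        have hA9 : A/9 ≤ (N:ℝ)/9 := by linarith
        linarith
      exact_mod_cast hr
    have hF2 : 2 ≤ N / sN := (Nat.le_div_iff_mul_le hspos).mpr (by omega)
    refine ⟨sN, hs1, le_min hsNle hsK, hF2, ?_⟩
    set F : ℕ := N / sN with hF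
    have hFpos : (0:ℝ) < (F:ℝ) - 1 := by
      have : (2:ℝ) ≤ (F:ℝ) := by exact_mod_cast hF2
      linarith
    have hmod : sN * F + N % sN = N := Nat.div_add_mod N sN
    have hmlt : N % sN < sN := Nat.mod_lt _ hspos
    have hmodr : (sN:ℝ) * (F:ℝ) + ((N % sN : ℕ):ℝ) = (N:ℝ) := by exact_mod_cast hmod
    have hmltr : ((N % sN : ℕ):ℝ) < (sN:ℝ) := by exact_mod_cast hmlt
    have p1 : t*((N:ℝ)-1)*(sN:ℝ) ≤ t*((N:ℝ)-1)*(A/9+1) :=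
      mul_le_mul_of_nonneg_left hs_ub.le (mul_nonneg ht0 (by linarith))
    have p3 : t*A*((N:ℝ)-1) ≤ ((N:ℝ)-1) := by
      have := mul_le_mul_of_nonneg_right htA (show (0:ℝ) ≤ (N:ℝ)-1 by linarith)
      linarith
    have p4 : t*((N:ℝ)-1) ≤ ((N:ℝ)-1)/17 := by
      have := mul_le_mul_of_nonneg_right ht17 (show (0:ℝ) ≤ (N:ℝ)-1 by linarith)
      linarith
    have h1 : t*((N:ℝ)-1)*(sN:ℝ) ≤ (8/17)*((N:ℝ) - 2*(sN:ℝ)) := by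
      nlinarith [p1, p3, p4, hs_ub, hAN, hN18]
    have h2 : (N:ℝ) - 2*(sN:ℝ) ≤ ((F:ℝ)-1)*(sN:ℝ) := by
      nlinarith [hmodr, hmltr]
    have hD : t*((N:ℝ)-1) ≤ (8/17)*((F:ℝ)-1) := by
      have hmul : t*((N:ℝ)-1) * (sN:ℝ) ≤ (8/17)*((F:ℝ)-1) * (sN:ℝ) := by
        nlinarith [h1, h2]
      exact le_of_mul_le_mul_right hmul hspos_r
    have hx : (sN:ℝ)*(M-1)/((F:ℝ)-1) ≤ (8/17)*(sN:ℝ) := by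
      rw [hMt, div_le_iff₀ hFpos]
      nlinarith [mul_le_mul_of_nonneg_left hD hspos_r.le]
    have hLHS : (K:ℝ)*(1-t)/(1+(K:ℝ)*t) ≤ A := by
      rw [hA, div_le_div_iff₀ hden hden]
      nlinarith [mul_nonneg (mul_nonneg hKpos.le hden.le) ht0]
    linarith [hx, hLHS, hs_lb]
end

section
/- Let N, K be natural numbers with N ≥ 2, K ≥ 1, and let M be a real number with (N−1)/N + 1 ≤ M ≤ N. Define R^D_s(M) = K·(1 − (M−1)/(N−1)) · min{ ((N−1)/(K·(M−1)))·(1 − (1 − (M−1)/(N−1))^K), 1 }. Then there exists a natural number s with 1 ≤ s ≤ min{N, K} and ⌊N/s⌋ ≥ 2 such that R^D_s(M) ≤ 17·( s − s·(M−1)/(⌊N/s⌋ − 1) ). -/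
set_option maxHeartbeats 1000000 in
/-- Constant-gap theorem for the decentralized secure caching scheme: in the regime
`(N-1)/N + 1 ≤ M ≤ N`, the achievable rate `R^D_s(M)` is within a multiplicative
factor `17` of the cut-set lower bound `s - s(M-1)/(⌊N/s⌋ - 1)` for some admissible `s`. -/
theorem decentralized_secure_constant_gap (N K : ℕ) (hN : 2 ≤ N) (hK : 1 ≤ K) (M : ℝ)
    (hM1 : ((N : ℝ) - 1) / N + 1 ≤ M) (hM2 : M ≤ N) :
    ∃ s : ℕ, 1 ≤ s ∧ s ≤ min N K ∧ 2 ≤ N / s ∧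
      (K : ℝ) * (1 - (M - 1) / ((N : ℝ) - 1))
          * min ((((N : ℝ) - 1) / ((K : ℝ) * (M - 1)))
              * (1 - (1 - (M - 1) / ((N : ℝ) - 1)) ^ K)) 1
        ≤ 17 * ((s : ℝ) - (s : ℝ) * (M - 1) / (((N / s : ℕ) : ℝ) - 1)) := by
  have hKR : (1:ℝ) ≤ (K:ℝ) := by exact_mod_cast hK
  have hNR : (2:ℝ) ≤ (N:ℝ) := by exact_mod_cast hN
  set t : ℝ := M - 1 with ht
  have hN1 : (1:ℝ) ≤ (N:ℝ) - 1 := by linarith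
  have htN : ((N:ℝ)-1)/(N:ℝ) ≤ t := by rw [ht]; linarith
  have ht2 : (1/2 : ℝ) ≤ t := by
    have h : (1/2:ℝ) ≤ ((N:ℝ)-1)/(N:ℝ) := by
      rw [le_div_iff₀ (by linarith : (0:ℝ) < (N:ℝ))]; linarith
    linarith
  have ht0 : (0:ℝ) < t := by linarith
  have htub : t ≤ (N:ℝ) - 1 := by rw [ht]; linarith
  set x : ℝ := t / ((N:ℝ)-1) with hx
  have hx0 : 0 ≤ x := div_nonneg ht0.le (by linarith)
  have hx1 : x ≤ 1 := by
    rw [hx, div_le_one (by linarith)]; exact htub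
  set A : ℝ := (((N:ℝ)-1)/((K:ℝ)*t)) * (1 - (1-x)^K) with hA
  have hKx0 : 0 ≤ (K:ℝ)*(1-x) := mul_nonneg (by linarith) (by linarith)
  have hL1 : (K:ℝ)*(1-x) * min A 1 ≤ (K:ℝ)*(1-x) := by
    calc (K:ℝ)*(1-x) * min A 1 ≤ (K:ℝ)*(1-x) * 1 :=
          mul_le_mul_of_nonneg_left (min_le_right _ _) hKx0
      _ = (K:ℝ)*(1-x) := mul_one _
  have hpow : 0 ≤ (1-x)^K := pow_nonneg (by linarith) K
  have hYnn : 0 ≤ ((N:ℝ)-1)/t := div_nonneg (by linarith) ht0.le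
  have hL2 : (K:ℝ)*(1-x) * min A 1 ≤ (1-x) * (((N:ℝ)-1)/t) := by
    have h1 : (K:ℝ)*(1-x) * min A 1 ≤ (K:ℝ)*(1-x) * A :=
      mul_le_mul_of_nonneg_left (min_le_left _ _) hKx0
    have h2 : (K:ℝ)*(1-x) * A = (1-x) * (((N:ℝ)-1)/t) * (1 - (1-x)^K) := by
      rw [hA]; field_simp
    have h3 : (1-x) * (((N:ℝ)-1)/t) * (1 - (1-x)^K) ≤ (1-x) * (((N:ℝ)-1)/t) * 1 :=
      mul_le_mul_of_nonneg_left (by linarith) (mul_nonneg (by linarith) hYnn)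
    calc (K:ℝ)*(1-x) * min A 1 ≤ (K:ℝ)*(1-x) * A := h1
      _ = (1-x) * (((N:ℝ)-1)/t) * (1 - (1-x)^K) := h2
      _ ≤ (1-x) * (((N:ℝ)-1)/t) * 1 := h3
      _ = (1-x) * (((N:ℝ)-1)/t) := mul_one _
  by_cases hcase : (N:ℝ) - 1 ≤ 4*t
  · -- large t : take s = 1
    refine ⟨1, le_refl 1, le_min (by omega) hK, by simpa using hN, ?_⟩
    rw [Nat.div_one]
    have h4 : ((N:ℝ)-1)/t ≤ 4 := by rw [div_le_iff₀ ht0]; linarith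
    have hprod : (1-x) * (((N:ℝ)-1)/t) ≤ 4*(1-x) := by nlinarith
    push_cast
    have hxe : (1:ℝ) * t / ((N:ℝ)-1) = x := by rw [hx]; ring
    rw [hxe]
    linarith
  · -- small t
    have hc : 4*t < (N:ℝ)-1 := not_le.mp hcase
    set m : ℕ := ⌈2*t⌉₊ + 1 with hm
    have hm_lb : 2*t + 1 ≤ (m:ℝ) := by
      rw [hm]; push_cast; linarith [Nat.le_ceil (2*t)]
    have hm_ub : (m:ℝ) ≤ 2*t + 2 := by
      rw [hm]; push_cast
      linarith [Nat.ceil_lt_add_one (by linarith : (0:ℝ) ≤ 2*t)]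
    have hm2 : 2 ≤ m := by exact_mod_cast (by linarith : (2:ℝ) ≤ (m:ℝ))
    have hmpos : 0 < m := by omega
    have hmN : m ≤ N := by
      have hlt : (m:ℝ) < (N:ℝ) := by linarith
      exact_mod_cast hlt.le
    set s0 : ℕ := N / m with hs0
    have hs0pos : 1 ≤ s0 := (Nat.le_div_iff_mul_le hmpos).mpr (by omega)
    set s : ℕ := min s0 K with hs
    have hs1 : 1 ≤ s := le_min hs0pos hK
    have hspos : 0 < s := hs1
    have hms : m * s ≤ N := by
      calc m * s ≤ m * s0 := Nat.mul_le_mul_left _ (min_le_left _ _)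
        _ ≤ N := by rw [mul_comm]; exact Nat.div_mul_le_self N m
    have hmL : m ≤ N / s := (Nat.le_div_iff_mul_le hspos).mpr hms
    refine ⟨s, hs1, le_min (le_trans (min_le_left _ _) (Nat.div_le_self N m))
      (min_le_right _ _), le_trans hm2 hmL, ?_⟩
    have hLr : 2*t + 1 ≤ ((N/s : ℕ):ℝ) :=
      le_trans hm_lb (by exact_mod_cast hmL)
    have hsnn : (0:ℝ) ≤ (s:ℝ) := Nat.cast_nonneg s
    have hfrac : (s:ℝ)*t/(((N/s : ℕ):ℝ) - 1) ≤ (s:ℝ)/2 := by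
      rw [div_le_iff₀ (by linarith : (0:ℝ) < ((N/s : ℕ):ℝ) - 1)]
      nlinarith
    have hmain : (K:ℝ)*(1-x) * min A 1 ≤ 17*(s:ℝ)/2 := by
      rcases le_total K s0 with hKs | hsK
      · have hseq : s = K := min_eq_right hKs
        rw [hseq]
        have hKx : 0 ≤ (K:ℝ)*x := mul_nonneg (by linarith) hx0
        linarith [hL1]
      · have hseq : s = s0 := min_eq_left hsK
        rw [hseq]
        have hkey : (N:ℝ) - 1 ≤ 17/2 * (s0:ℝ) * t := by
          rcases Nat.lt_or_ge s0 2 with hlt2 | hge2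
          · have hs0e : s0 = 1 := by omega
            have hNlt : N < 2 * m := by
              have : N / m < 2 := by omega
              exact (Nat.div_lt_iff_lt_mul hmpos).mp this
            have hNlt' : (N:ℝ) + 1 ≤ 2 * (m:ℝ) := by exact_mod_cast hNlt
            rw [hs0e]
            push_cast
            nlinarith
          · have hNlt : N < (s0 + 1) * m :=
              (Nat.div_lt_iff_lt_mul hmpos).mp (Nat.lt_succ_self _)
            have hNlt' : (N:ℝ) < ((s0:ℝ) + 1) * (m:ℝ) := by exact_mod_cast hNlt
            have hs02 : (2:ℝ) ≤ (s0:ℝ) := by exact_mod_cast hge2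
            rcases le_total 1 t with h1t | ht1
            · have h1 : (m:ℝ) ≤ 4*t := by linarith
              have h2 : (s0:ℝ) + 1 ≤ 3/2 * (s0:ℝ) := by linarith
              nlinarith
            · have hm3 : m ≤ 3 := by
                have : ⌈2*t⌉₊ ≤ 2 := Nat.ceil_le.mpr (by push_cast; linarith)
                omega
              have hm3' : (m:ℝ) ≤ 3 := by exact_mod_cast hm3
              nlinarith
        have hdt : ((N:ℝ)-1)/t ≤ 17/2 * (s0:ℝ) := by
          rw [div_le_iff₀ ht0]; linarith
        have hstep : (1-x) * (((N:ℝ)-1)/t) ≤ ((N:ℝ)-1)/t := by nlinarith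
        linarith
    linarith
end

section
/- Let N, K be natural numbers with N ≥ 2, K ≥ 1, and let M be a real number with (N−1)/N + 1 ≤ M ≤ N. Define R^C_s(M) = K·(1 − (M−1)/(N−1))/(1 + K·(M−1)/(N−1)) and R^D_s(M) = K·(1 − (M−1)/(N−1)) · min{ ((N−1)/(K·(M−1)))·(1 − (1 − (M−1)/(N−1))^K), 1 }. Then R^D_s(M) ≤ 17 · R^C_s(M). -/
/-- Corollary 1: the decentralized secure caching rate `R^D_s(M)` is at most `17` times the
centralized secure caching rate `R^C_s(M)` in the regime `(N-1)/N + 1 ≤ M ≤ N`. -/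
theorem decentralized_vs_centralized_gap (N K : ℕ) (hN : 2 ≤ N) (hK : 1 ≤ K) (M : ℝ)
    (hM1 : ((N : ℝ) - 1) / N + 1 ≤ M) (hM2 : M ≤ N) :
    (K : ℝ) * (1 - (M - 1) / ((N : ℝ) - 1))
        * min ((((N : ℝ) - 1) / ((K : ℝ) * (M - 1)))
            * (1 - (1 - (M - 1) / ((N : ℝ) - 1)) ^ K)) 1
      ≤ 17 * ((K : ℝ) * (1 - (M - 1) / ((N : ℝ) - 1))
          / (1 + (K : ℝ) * ((M - 1) / ((N : ℝ) - 1)))) := by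
  have hN2 : (2:ℝ) ≤ (N:ℝ) := by exact_mod_cast hN
  have hNpos : (0:ℝ) < (N:ℝ) - 1 := by linarith
  have hKpos : (0:ℝ) < (K:ℝ) := by exact_mod_cast hK
  set t : ℝ := (M - 1) / ((N:ℝ) - 1) with ht
  have hM1' : (0:ℝ) < M - 1 := by
    have h1 : (0:ℝ) < ((N:ℝ)-1)/N := div_pos hNpos (by linarith)
    linarith
  have htpos : 0 < t := div_pos hM1' hNpos
  have ht1 : t ≤ 1 := by
    rw [ht, div_le_one hNpos]; linarith
  have hpow : 0 ≤ (1 - t)^K := pow_nonneg (by linarith) K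
  have hd : (0:ℝ) < 1 + (K:ℝ) * t := by positivity
  have hmin : min ((((N : ℝ) - 1) / ((K : ℝ) * (M - 1))) * (1 - (1 - t) ^ K)) 1
      ≤ 2 / (1 + (K:ℝ) * t) := by
    rcases le_or_gt ((K:ℝ)*t) 1 with h | h
    · calc min ((((N : ℝ) - 1) / ((K : ℝ) * (M - 1))) * (1 - (1 - t) ^ K)) 1 ≤ 1 :=
            min_le_right _ _
        _ ≤ 2 / (1 + (K:ℝ)*t) := by
            rw [le_div_iff₀ hd]; nlinarith
    · have heq : ((N : ℝ) - 1) / ((K : ℝ) * (M - 1)) = 1/((K:ℝ)*t) := by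
        rw [ht]; field_simp
      have hKt : (0:ℝ) < (K:ℝ)*t := by positivity
      have h1 : (((N : ℝ) - 1) / ((K : ℝ) * (M - 1))) * (1 - (1 - t) ^ K)
          ≤ 1/((K:ℝ)*t) := by
        rw [heq]
        calc 1/((K:ℝ)*t) * (1 - (1-t)^K) ≤ 1/((K:ℝ)*t) * 1 := by
              apply mul_le_mul_of_nonneg_left (by linarith) (by positivity)
          _ = 1/((K:ℝ)*t) := mul_one _
      calc min ((((N : ℝ) - 1) / ((K : ℝ) * (M - 1))) * (1 - (1 - t) ^ K)) 1
          ≤ 1/((K:ℝ)*t) := le_trans (min_le_left _ _) h1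
        _ ≤ 2/(1 + (K:ℝ)*t) := by
            rw [div_le_div_iff₀ hKt hd]; nlinarith
  have hfac : (0:ℝ) ≤ (K:ℝ) * (1 - t) := by
    apply mul_nonneg hKpos.le; linarith
  calc (K : ℝ) * (1 - t) * min ((((N : ℝ) - 1) / ((K : ℝ) * (M - 1))) * (1 - (1 - t) ^ K)) 1
      ≤ (K:ℝ) * (1 - t) * (2 / (1 + (K:ℝ)*t)) := mul_le_mul_of_nonneg_left hmin hfac
    _ = 2 * ((K:ℝ) * (1 - t)) / (1 + (K:ℝ)*t) := by ring
    _ ≤ 17 * ((K:ℝ) * (1 - t)) / (1 + (K:ℝ)*t) := by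
        gcongr; nlinarith
    _ = 17 * ((K:ℝ) * (1 - t) / (1 + (K:ℝ)*t)) := by ring
end

section
/- Let N, K be natural numbers with K > N ≥ 2, and let M be a real number with (K−N)(N−1)/(K·N) + 1 ≤ M ≤ N. Then K/(1 + K·(M−1)/(N−1)) ≤ N, and consequently K·(1 − (M−1)/(N−1))/(1 + K·(M−1)/(N−1)) ≤ min{N, K}·(1 − (M−1)/(N−1)). -/
/-- For `K > N` and `(K-N)(N-1)/(KN) + 1 ≤ M ≤ N`, the centralized secure rate satisfies
`K/(1 + K(M-1)/(N-1)) ≤ N` and hence `R^C_s(M) ≤ min{N,K}(1 - (M-1)/(N-1))`. -/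
theorem centralized_rate_min_bound (N K : ℕ) (hN : 2 ≤ N) (hNK : N < K) (M : ℝ)
    (hM1 : ((K : ℝ) - N) * ((N : ℝ) - 1) / ((K : ℝ) * N) + 1 ≤ M) (hM2 : M ≤ N) :
    (K : ℝ) / (1 + (K : ℝ) * ((M - 1) / ((N : ℝ) - 1))) ≤ N ∧
    (K : ℝ) * (1 - (M - 1) / ((N : ℝ) - 1)) / (1 + (K : ℝ) * ((M - 1) / ((N : ℝ) - 1)))
      ≤ min (N : ℝ) (K : ℝ) * (1 - (M - 1) / ((N : ℝ) - 1)) := by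
  have hN1 : (1 : ℝ) < N := by exact_mod_cast Nat.lt_of_lt_of_le Nat.one_lt_two hN
  have hN0 : (0 : ℝ) < N := by linarith
  have hK0 : (0 : ℝ) < K := by
    have : (N : ℝ) < K := by exact_mod_cast hNK
    linarith
  have hNK' : (N : ℝ) < K := by exact_mod_cast hNK
  have hN1' : (0 : ℝ) < (N : ℝ) - 1 := by linarith
  set a : ℝ := (M - 1) / ((N : ℝ) - 1) with ha
  -- lower bound on a
  have hage : ((K : ℝ) - N) / ((K : ℝ) * N) ≤ a := by
    rw [ha, div_le_div_iff₀ (by positivity) hN1']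
    have : ((K : ℝ) - N) * ((N : ℝ) - 1) / ((K : ℝ) * N) ≤ M - 1 := by linarith
    calc ((K : ℝ) - N) * ((N : ℝ) - 1)
        = ((K : ℝ) - N) * ((N : ℝ) - 1) / ((K : ℝ) * N) * ((K : ℝ) * N) := by
          field_simp
      _ ≤ (M - 1) * ((K : ℝ) * N) := by
          apply mul_le_mul_of_nonneg_right this (by positivity)
  have hale : a ≤ 1 := by
    rw [ha, div_le_one hN1']
    linarith
  have hD : (K : ℝ) / N ≤ 1 + (K : ℝ) * a := by
    have h1 : (K : ℝ) * (((K : ℝ) - N) / ((K : ℝ) * N)) ≤ (K : ℝ) * a :=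
      mul_le_mul_of_nonneg_left hage (le_of_lt hK0)
    have h2 : (K : ℝ) * (((K : ℝ) - N) / ((K : ℝ) * N)) = ((K : ℝ) - N) / N := by
      field_simp
    rw [h2] at h1
    have : (K : ℝ) / N = 1 + ((K : ℝ) - N) / N := by field_simp; ring
    linarith
  have hDpos : (0 : ℝ) < 1 + (K : ℝ) * a := lt_of_lt_of_le (by positivity) hD
  have hfirst : (K : ℝ) / (1 + (K : ℝ) * a) ≤ N := by
    rw [div_le_iff₀ hDpos]
    calc (K : ℝ) = N * ((K : ℝ) / N) := by field_simp
      _ ≤ N * (1 + (K : ℝ) * a) := mul_le_mul_of_nonneg_left hD (le_of_lt hN0)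
  refine ⟨hfirst, ?_⟩
  rw [min_eq_left (le_of_lt hNK')]
  have h1a : 0 ≤ 1 - a := by linarith
  calc (K : ℝ) * (1 - a) / (1 + (K : ℝ) * a)
      = (K : ℝ) / (1 + (K : ℝ) * a) * (1 - a) := by ring
    _ ≤ (N : ℝ) * (1 - a) := mul_le_mul_of_nonneg_right hfirst h1a
end

section
/- Let N, K be natural numbers with min{N, K} ≥ 18, and let M be a real number with 1 ≤ M and M − 1 ≤ 1.2·max{1, (N−1)/K}. Let s = ⌊0.1586·min{N, K}⌋. Then 1 ≤ s ≤ min{N, K}, ⌊N/s⌋ ≥ 2, and s − s·(M−1)/(⌊N/s⌋ − 1) ≥ min{N, K}/17. -/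
set_option maxHeartbeats 1000000 in
/-- Regime 1 estimate in the proof of the centralized constant-gap theorem: for
`min{N,K} ≥ 18` and `M - 1 ≤ 1.2 max{1, (N-1)/K}`, the choice `s = ⌊0.1586 min{N,K}⌋`
is admissible and the cut-set lower bound is at least `min{N,K}/17`. -/
theorem regime1_lower_bound (N K : ℕ) (h : 18 ≤ min N K) (M : ℝ)
    (hM1 : 1 ≤ M) (hM2 : M - 1 ≤ 1.2 * max 1 (((N : ℝ) - 1) / K))
    (s : ℕ) (hs : s = ⌊0.1586 * ((min N K : ℕ) : ℝ)⌋₊) :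
    1 ≤ s ∧ s ≤ min N K ∧ 2 ≤ N / s ∧
      ((min N K : ℕ) : ℝ) / 17
        ≤ (s : ℝ) - (s : ℝ) * (M - 1) / (((N / s : ℕ) : ℝ) - 1) := by
  set m : ℕ := min N K with hmdef
  have hmN : m ≤ N := min_le_left _ _
  have hmK : m ≤ K := min_le_right _ _
  have hmR : (18 : ℝ) ≤ (m : ℝ) := by exact_mod_cast h
  have hmNR : (m : ℝ) ≤ (N : ℝ) := by exact_mod_cast hmN
  have hmKR : (m : ℝ) ≤ (K : ℝ) := by exact_mod_cast hmK
  have hKpos : (0 : ℝ) < K := by linarith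
  -- basic facts about s
  have hsle : (s : ℝ) ≤ 0.1586 * (m : ℝ) := by
    rw [hs]; exact Nat.floor_le (by positivity)
  have hslt : 0.1586 * (m : ℝ) < (s : ℝ) + 1 := by
    rw [hs]; exact Nat.lt_floor_add_one _
  have hs2 : 2 ≤ s := by
    rw [hs]; exact Nat.le_floor (by push_cast; nlinarith)
  have hs1 : 1 ≤ s := le_trans (by norm_num) hs2
  have hsm : s ≤ m := by
    have : (s : ℝ) ≤ (m : ℝ) := by nlinarith
    exact_mod_cast this
  have hspos : (0 : ℝ) < (s : ℝ) := by
    have : (0:ℕ) < s := hs1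
    exact_mod_cast this
  -- 6 * s ≤ N
  have h6s : 6 * s ≤ N := by
    have : (6 * s : ℝ) ≤ (N : ℝ) := by push_cast; nlinarith
    exact_mod_cast this
  have hq6 : 6 ≤ N / s := (Nat.le_div_iff_mul_le hs1).mpr (by omega)
  set q : ℕ := N / s with hqdef
  have hq6R : (6 : ℝ) ≤ (q : ℝ) := by exact_mod_cast hq6
  have hqden : (0 : ℝ) < (q : ℝ) - 1 := by linarith
  -- N < s * (q + 1)
  have hNq : (N : ℝ) < (s : ℝ) * ((q : ℝ) + 1) := by
    have hdm := Nat.div_add_mod N s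
    have hmod : N % s < s := Nat.mod_lt _ hs1
    have h1 : (s : ℝ) * (q : ℝ) + ((N % s : ℕ) : ℝ) = (N : ℝ) := by
      exact_mod_cast hdm
    have h2 : ((N % s : ℕ) : ℝ) < (s : ℝ) := by exact_mod_cast hmod
    nlinarith
  -- key bound on the subtracted term
  have hkey : (s : ℝ) * (M - 1) / ((q : ℝ) - 1) ≤ 0.2788 * (s : ℝ) := by
    rw [div_le_iff₀ hqden]
    rcases le_or_gt N K with hNK | hKN
    · -- m = N, max = 1
      have hNK' : ((N : ℝ) - 1) / K ≤ 1 := by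
        rw [div_le_one hKpos]
        have : (N : ℝ) ≤ (K : ℝ) := by exact_mod_cast hNK
        linarith
      have hmax : max 1 (((N : ℝ) - 1) / K) = 1 := max_eq_left hNK'
      rw [hmax] at hM2
      nlinarith
    · -- K < N, max = (N-1)/K
      have hKN' : (1 : ℝ) ≤ ((N : ℝ) - 1) / K := by
        rw [le_div_iff₀ hKpos]
        have : (K : ℝ) + 1 ≤ (N : ℝ) := by exact_mod_cast hKN
        linarith
      have hmax : max 1 (((N : ℝ) - 1) / K) = ((N : ℝ) - 1) / K := max_eq_right hKN'
      rw [hmax] at hM2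
      have hM2' : (M - 1) * K ≤ 1.2 * ((N : ℝ) - 1) := by
        have h0 := mul_le_mul_of_nonneg_right hM2 hKpos.le
        rw [mul_assoc, div_mul_cancel₀ _ hKpos.ne'] at h0
        exact h0
      -- (q - 1) > (N - 2s)/s, i.e. s*(q-1) > N - 2s
      have hq1 : (N : ℝ) - 2 * s < (s : ℝ) * ((q : ℝ) - 1) := by nlinarith
      have hKNR : (K : ℝ) + 1 ≤ (N : ℝ) := by exact_mod_cast hKN
      have hM0 : (0 : ℝ) ≤ M - 1 := by linarith
      have hA : (0 : ℝ) ≤ 0.1586 * K - s := by linarith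
      have hB : (0 : ℝ) ≤ (N : ℝ) - K := by linarith
      -- target: s*(M-1) ≤ 0.2788 * s * (q-1)
      have hmain : 1.2 * (s : ℝ) * ((N : ℝ) - 1) ≤ 0.2788 * ((K : ℝ) * ((N : ℝ) - 2 * s)) := by
        nlinarith [mul_nonneg hA (by linarith : (0:ℝ) ≤ (N:ℝ)),
          mul_nonneg hA hKpos.le, mul_nonneg hB hKpos.le,
          mul_nonneg hKpos.le hKpos.le]
      have h1 : (s : ℝ) * (M - 1) * K ≤ 1.2 * (s : ℝ) * ((N : ℝ) - 1) := by
        nlinarith [mul_le_mul_of_nonneg_left hM2' hspos.le]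
      have h2 : 0.2788 * ((K : ℝ) * ((N : ℝ) - 2 * s))
          ≤ 0.2788 * (s : ℝ) * ((q : ℝ) - 1) * K := by
        nlinarith [mul_le_mul_of_nonneg_left hq1.le hKpos.le]
      have h3 : (s : ℝ) * (M - 1) * K ≤ 0.2788 * (s : ℝ) * ((q : ℝ) - 1) * K := by
        linarith
      exact le_of_mul_le_mul_right (by linarith) hKpos
  refine ⟨hs1, hsm, le_trans (by norm_num) hq6, ?_⟩
  linarith
end

section
/- Let N, K be natural numbers with min{N, K} ≥ 18, and let M be a real number with 1.2·max{1, (N−1)/K} < M − 1 ≤ 0.0628·(N−1). Let s = ⌊0.1530·(N−1)/(M−1)⌋. Then 1 ≤ s ≤ min{N, K}, ⌊N/s⌋ ≥ 2, and s − s·(M−1)/(⌊N/s⌋ − 1) ≥ (1/17)·(N−1)/(M−1). -/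
set_option maxHeartbeats 1000000

/-- Regime 2 estimate in the proof of the centralized constant-gap theorem: for
`min{N,K} ≥ 18` and `1.2 max{1, (N-1)/K} < M - 1 ≤ 0.0628 (N-1)`, the choice
`s = ⌊0.1530 (N-1)/(M-1)⌋` is admissible and the cut-set lower bound is at least
`(N-1)/(17(M-1))`. -/
theorem regime2_lower_bound_centralized (N K : ℕ) (h : 18 ≤ min N K) (M : ℝ)
    (hM1 : 1.2 * max 1 (((N : ℝ) - 1) / K) < M - 1) (hM2 : M - 1 ≤ 0.0628 * ((N : ℝ) - 1))
    (s : ℕ) (hs : s = ⌊0.1530 * (((N : ℝ) - 1) / (M - 1))⌋₊) :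
    1 ≤ s ∧ s ≤ min N K ∧ 2 ≤ N / s ∧
      1 / 17 * (((N : ℝ) - 1) / (M - 1))
        ≤ (s : ℝ) - (s : ℝ) * (M - 1) / (((N / s : ℕ) : ℝ) - 1) := by
  have hN : 18 ≤ N := le_trans h (min_le_left _ _)
  have hK : 18 ≤ K := le_trans h (min_le_right _ _)
  set n : ℝ := (N : ℝ) - 1 with hn
  set d : ℝ := M - 1 with hdd
  have hn17 : (17 : ℝ) ≤ n := by
    have : (18 : ℝ) ≤ (N : ℝ) := by exact_mod_cast hN
    simp only [hn]; linarith
  have hK0 : (0 : ℝ) < (K : ℝ) := by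
    have : (18 : ℝ) ≤ (K : ℝ) := by exact_mod_cast hK
    linarith
  have hd12 : (1.2 : ℝ) < d := by
    have h1 : (1.2 : ℝ) * 1 ≤ 1.2 * max 1 (n / K) :=
      mul_le_mul_of_nonneg_left (le_max_left _ _) (by norm_num)
    calc (1.2 : ℝ) = 1.2 * 1 := by ring
      _ ≤ 1.2 * max 1 (n / K) := h1
      _ < d := hM1
  have hd0 : (0 : ℝ) < d := by linarith
  set x : ℝ := n / d with hx
  have hx0 : (0 : ℝ) < x := by
    apply div_pos (by linarith) hd0
  have hxd : x * d = n := div_mul_cancel₀ _ (ne_of_gt hd0)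
  have hx_lb : (1 : ℝ) ≤ 0.0628 * x := by
    have h2 : d ≤ 0.0628 * (x * d) := by rw [hxd]; exact hM2
    nlinarith
  have hxn : 1.2 * x < n := by nlinarith
  have hxK : 1.2 * x < (K : ℝ) := by
    have h1 : 1.2 * (n / K) < d :=
      lt_of_le_of_lt (mul_le_mul_of_nonneg_left (le_max_right _ _) (by norm_num)) hM1
    have h3 := mul_lt_mul_of_pos_right h1 hK0
    rw [mul_assoc, div_mul_cancel₀ _ (ne_of_gt hK0)] at h3
    nlinarith
  have hsle : (s : ℝ) ≤ 0.1530 * x := by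
    rw [hs]
    exact Nat.floor_le (by positivity)
  have hsgt : 0.1530 * x - 1 < (s : ℝ) := by
    rw [hs]
    have := Nat.lt_floor_add_one (0.1530 * x)
    linarith
  have hs2 : 2 ≤ s := by
    rw [hs]
    apply Nat.le_floor
    push_cast
    linarith
  have hs0 : 0 < s := by omega
  have hsR0 : (0 : ℝ) ≤ (s : ℝ) := by positivity
  have hsN : s ≤ N := by
    have hNn : (N : ℝ) = n + 1 := by rw [hn]; ring
    have : (s : ℝ) < (N : ℝ) := by linarith
    exact_mod_cast this.le
  have hsK : s ≤ K := by
    have : (s : ℝ) < (K : ℝ) := by linarith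
    exact_mod_cast this.le
  have h2s : 2 * s ≤ N := by
    have : 2 * (s : ℝ) ≤ (N : ℝ) := by
      have hNn : (N : ℝ) = n + 1 := by rw [hn]; ring
      linarith
    exact_mod_cast this
  have hq2 : 2 ≤ N / s := (Nat.le_div_iff_mul_le hs0).mpr (by omega)
  refine ⟨by omega, le_min hsN hsK, hq2, ?_⟩
  set q : ℕ := N / s with hq
  have hqR2 : (2 : ℝ) ≤ (q : ℝ) := by exact_mod_cast hq2
  have hq1 : (0 : ℝ) < (q : ℝ) - 1 := by linarith
  -- floor division bound: s * q ≥ N - s + 1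
  have hqs : (N : ℝ) - (s : ℝ) + 1 ≤ (s : ℝ) * (q : ℝ) := by
    have hdm := Nat.div_add_mod N s
    have hmod : N % s < s := Nat.mod_lt _ hs0
    have hmodR : ((N % s : ℕ) : ℝ) ≤ (s : ℝ) - 1 := by
      have : N % s + 1 ≤ s := hmod
      have := (Nat.cast_le (α := ℝ)).mpr this
      push_cast at this
      linarith
    have hdmR : (s : ℝ) * (q : ℝ) + ((N % s : ℕ) : ℝ) = (N : ℝ) := by
      exact_mod_cast hdm
    linarith
  have hNn : (N : ℝ) = n + 1 := by rw [hn]; ring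
  have hden : (0 : ℝ) < n + 2 - 2 * (s : ℝ) := by linarith
  have hkey : n + 2 - 2 * (s : ℝ) ≤ (s : ℝ) * ((q : ℝ) - 1) := by
    have hr : (s : ℝ) * ((q : ℝ) - 1) = (s : ℝ) * (q : ℝ) - s := by ring
    linarith
  have hpen : (s : ℝ) * d / ((q : ℝ) - 1) ≤ (s : ℝ) ^ 2 * d / (n + 2 - 2 * (s : ℝ)) := by
    rw [div_le_div_iff₀ hq1 hden]
    have hsd : (0 : ℝ) ≤ (s : ℝ) * d := mul_nonneg hsR0 hd0.le
    nlinarith [mul_le_mul_of_nonneg_left hkey hsd]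
  have main : 1 / 17 * x ≤ (s : ℝ) - (s : ℝ) ^ 2 * d / (n + 2 - 2 * (s : ℝ)) := by
    rcases le_or_gt 16 x with h16 | h16
    · -- large x case
      have hnum : (s : ℝ) ^ 2 * d ≤ 0.023409 * x * n := by
        have hss : (s : ℝ) ^ 2 ≤ 0.023409 * x ^ 2 := by nlinarith
        nlinarith
      have hden2 : 0.745 * n + 2 ≤ n + 2 - 2 * (s : ℝ) := by linarith
      have hden2p : (0 : ℝ) < 0.745 * n + 2 := by linarith
      have h1 : (s : ℝ) ^ 2 * d / (n + 2 - 2 * (s : ℝ)) ≤ 0.023409 * x * n / (0.745 * n + 2) :=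
        div_le_div₀ (by positivity) hnum hden2p hden2
      have h2 : 0.023409 * x * n / (0.745 * n + 2) ≤ 0.023409 / 0.745 * x := by
        rw [div_le_iff₀ hden2p]
        nlinarith
      have h3 : 1 / 17 * x ≤ 0.1530 * x - 1 - 0.023409 / 0.745 * x := by nlinarith
      linarith
    · -- x < 16, then s = 2
      have hsle2 : s ≤ 2 := by
        have : (s : ℝ) < 3 := by linarith
        exact_mod_cast Nat.lt_succ_iff.mp (by exact_mod_cast this)
      have hseq : s = 2 := le_antisymm hsle2 hs2
      have hsR : (s : ℝ) = 2 := by rw [hseq]; norm_num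
      have hn20 : (20 : ℝ) ≤ n := by
        have hNgt : (20 : ℝ) < (N : ℝ) := by linarith
        have : 20 < N := by exact_mod_cast hNgt
        have : (21 : ℝ) ≤ (N : ℝ) := by exact_mod_cast this
        linarith
      rw [hsR]
      have hdenp : (0 : ℝ) < n - 2 := by linarith
      have hpen2 : (2 : ℝ) ^ 2 * d / (n + 2 - 2 * 2) ≤ 0.28 := by
        have : n + 2 - 2 * 2 = n - 2 := by ring
        rw [this, div_le_iff₀ hdenp]
        linarith [hM2]
      linarith
  calc 1 / 17 * x ≤ (s : ℝ) - (s : ℝ) ^ 2 * d / (n + 2 - 2 * (s : ℝ)) := main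
    _ ≤ (s : ℝ) - (s : ℝ) * d / ((q : ℝ) - 1) := by linarith
end

section
/- Let N, K be natural numbers with min{N, K} ≥ 18, and let M be a real number with 1.2·max{1, (N−1)/K} < M − 1 ≤ (N−1)/17. Let s = ⌊0.1460·(N−1)/(M−1)⌋. Then 1 ≤ s ≤ min{N, K}, ⌊N/s⌋ ≥ 2, and s − s·(M−1)/(⌊N/s⌋ − 1) ≥ (1/17)·(N−1)/(M−1). -/
set_option maxHeartbeats 1000000 in
/-- Regime 2 estimate in the proof of the decentralized constant-gap theorem: for
`min{N,K} ≥ 18` and `1.2 max{1, (N-1)/K} < M - 1 ≤ (N-1)/17`, the choice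
`s = ⌊0.1460 (N-1)/(M-1)⌋` is admissible and the cut-set lower bound is at least
`(N-1)/(17(M-1))`. -/
theorem regime2_lower_bound_decentralized (N K : ℕ) (h : 18 ≤ min N K) (M : ℝ)
    (hM1 : 1.2 * max 1 (((N : ℝ) - 1) / K) < M - 1) (hM2 : M - 1 ≤ ((N : ℝ) - 1) / 17)
    (s : ℕ) (hs : s = ⌊0.1460 * (((N : ℝ) - 1) / (M - 1))⌋₊) :
    1 ≤ s ∧ s ≤ min N K ∧ 2 ≤ N / s ∧
      1 / 17 * (((N : ℝ) - 1) / (M - 1))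
        ≤ (s : ℝ) - (s : ℝ) * (M - 1) / (((N / s : ℕ) : ℝ) - 1) := by
  obtain ⟨hN, hK⟩ := le_min_iff.mp h
  have hn : (18:ℝ) ≤ (N:ℝ) := by exact_mod_cast hN
  have hk : (18:ℝ) ≤ (K:ℝ) := by exact_mod_cast hK
  have hkpos : (0:ℝ) < K := by linarith
  have hmax : (1:ℝ) ≤ max 1 (((N:ℝ) - 1) / K) := le_max_left _ _
  have ha0 : (6/5:ℝ) < M - 1 := by nlinarith [hM1, hmax]
  have hapos : (0:ℝ) < M - 1 := by linarith
  have ha17 : 17 * (M - 1) ≤ (N:ℝ) - 1 := by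
    rw [le_div_iff₀ (by norm_num : (0:ℝ) < 17)] at hM2; linarith
  have haK : 1.2 * ((N:ℝ) - 1) < (M - 1) * K := by
    have hmax2 : ((N:ℝ) - 1) / K ≤ max 1 (((N:ℝ) - 1) / K) := le_max_right _ _
    have h2 : (1.2:ℝ) * (((N:ℝ) - 1) / K) < M - 1 := by nlinarith [hM1, hmax2]
    rw [← mul_div_assoc, div_lt_iff₀ hkpos] at h2
    linarith
  -- floor bounds
  have hxpos : (0:ℝ) ≤ 0.1460 * (((N:ℝ) - 1) / (M - 1)) :=
    mul_nonneg (by norm_num) (div_nonneg (by linarith) hapos.le)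
  have ht1 : (s:ℝ) ≤ 0.1460 * (((N:ℝ) - 1) / (M - 1)) := by
    rw [hs]; exact Nat.floor_le hxpos
  have ht2 : 0.1460 * (((N:ℝ) - 1) / (M - 1)) < (s:ℝ) + 1 := by
    rw [hs]; exact Nat.lt_floor_add_one _
  have hta : (s:ℝ) * (M - 1) ≤ 0.1460 * ((N:ℝ) - 1) := by
    rw [← mul_div_assoc] at ht1
    have := (le_div_iff₀ hapos).mp ht1; linarith
  have hta2 : 0.1460 * ((N:ℝ) - 1) < ((s:ℝ) + 1) * (M - 1) := by
    rw [← mul_div_assoc] at ht2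
    have := (div_lt_iff₀ hapos).mp ht2; linarith
  have hs1 : 1 ≤ s := by
    rw [hs]
    apply Nat.le_floor
    have hx17 : (17:ℝ) ≤ ((N:ℝ) - 1) / (M - 1) := (le_div_iff₀ hapos).mpr (by linarith)
    push_cast
    nlinarith
  have htpos : (0:ℝ) < (s:ℝ) := by exact_mod_cast hs1
  clear hs hM1 hM2 hmax hxpos ht1 ht2
  have hm65 : (s:ℝ) * (6/5) ≤ (s:ℝ) * (M - 1) :=
    mul_le_mul_of_nonneg_left ha0.le htpos.le
  have hsN : (s:ℝ) < (N:ℝ) := by nlinarith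
  have hsK : (s:ℝ) < (K:ℝ) := by nlinarith
  have h2s : 2 * (s:ℝ) < (N:ℝ) := by nlinarith
  have hsleN : s ≤ N := le_of_lt (by exact_mod_cast hsN)
  have hsleK : s ≤ K := le_of_lt (by exact_mod_cast hsK)
  have hs0 : 0 < s := hs1
  have hdiv2 : 2 ≤ N / s := by
    rw [Nat.le_div_iff_mul_le hs0]
    have h2sN : 2 * s < N := by exact_mod_cast (show ((2*s:ℕ):ℝ) < (N:ℝ) by push_cast; linarith)
    omega
  refine ⟨hs1, le_min hsleN hsleK, hdiv2, ?_⟩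
  have hr2 : (2:ℝ) ≤ ((N / s : ℕ) : ℝ) := by exact_mod_cast hdiv2
  have hr1 : (0:ℝ) < ((N / s : ℕ) : ℝ) - 1 := by linarith
  have hdivlt : (N:ℝ) < (s:ℝ) * ((N / s : ℕ) : ℝ) + (s:ℝ) := by
    have h1 : N < s * (N / s) + s := by
      have := Nat.div_add_mod N s
      have := Nat.mod_lt N hs0
      omega
    exact_mod_cast h1
  have htr : (N:ℝ) - 2 * s < (s:ℝ) * (((N / s : ℕ) : ℝ) - 1) := by nlinarith
  have hn2t : (0:ℝ) < (N:ℝ) - 2 * s := by linarith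
  have hstep : (s:ℝ) * (M - 1) / (((N / s : ℕ) : ℝ) - 1)
      < (s:ℝ) * (s:ℝ) * (M - 1) / ((N:ℝ) - 2 * s) := by
    rw [div_lt_div_iff₀ hr1 hn2t]
    nlinarith [mul_pos htpos hapos]
  have h2t : 2 * (s:ℝ) < 0.2434 * ((N:ℝ) - 1) := by nlinarith
  have hstep2 : (s:ℝ) * (s:ℝ) * (M - 1) / ((N:ℝ) - 2 * s) ≤ 0.193 * s := by
    rw [div_le_iff₀ hn2t]
    nlinarith
  have hfinal1 : 1 / 17 * (((N:ℝ) - 1) / (M - 1)) ≤ 0.807 * s := by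
    rw [← mul_div_assoc, div_le_iff₀ hapos]
    nlinarith
  linarith
end

section
/- Let N, K be natural numbers with N ≥ 2, K ≥ 1, and let M be a real number with 0.0628·(N−1) < M − 1 ≤ N − 1. Then K·(1 − (M−1)/(N−1))/(1 + K·(M−1)/(N−1)) ≤ (1/(0.0628·(1 − 0.0628)))·(1 − (M−1)/(N−1)). -/
/-- Regime 3 upper bound in the proof of the centralized constant-gap theorem: for
`0.0628(N-1) < M - 1 ≤ N - 1`, the centralized secure rate satisfies
`R^C_s(M) ≤ (1/(0.0628(1-0.0628)))(1 - (M-1)/(N-1))`. -/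
theorem regime3_upper_bound_centralized (N K : ℕ) (hN : 2 ≤ N) (hK : 1 ≤ K) (M : ℝ)
    (hM1 : 0.0628 * ((N : ℝ) - 1) < M - 1) (hM2 : M - 1 ≤ (N : ℝ) - 1) :
    (K : ℝ) * (1 - (M - 1) / ((N : ℝ) - 1)) / (1 + (K : ℝ) * ((M - 1) / ((N : ℝ) - 1)))
      ≤ 1 / (0.0628 * (1 - 0.0628)) * (1 - (M - 1) / ((N : ℝ) - 1)) := by
  have hN1 : (0:ℝ) < (N : ℝ) - 1 := by
    have : (2:ℝ) ≤ (N : ℝ) := by exact_mod_cast hN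
    linarith
  set t : ℝ := (M - 1) / ((N : ℝ) - 1) with ht
  have ht0 : 0.0628 < t := by
    rw [ht, lt_div_iff₀ hN1]; linarith
  have ht1 : t ≤ 1 := by
    rw [ht, div_le_one hN1]; linarith
  have hK1 : (1:ℝ) ≤ (K:ℝ) := by exact_mod_cast hK
  have hden : (0:ℝ) < 1 + (K:ℝ) * t := by nlinarith
  rw [div_le_iff₀ hden]
  have h1t : 0 ≤ 1 - t := by linarith
  nlinarith [mul_nonneg h1t (le_of_lt (lt_trans (by norm_num) ht0)),
    mul_nonneg (mul_nonneg h1t hden.le) (sub_nonneg.2 ht0.le),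
    mul_nonneg h1t (mul_nonneg (by linarith : (0:ℝ) ≤ (K:ℝ)) (sub_nonneg.2 ht0.le))]
end

section
/- Let N, K be natural numbers with N ≥ 2, K ≥ 1, and let M be a real number with (N−1)/17 ≤ M − 1 ≤ N − 1. Then K·(1 − (M−1)/(N−1)) · min{ ((N−1)/(K·(M−1)))·(1 − (1 − (M−1)/(N−1))^K), 1 } ≤ 17·(1 − (M−1)/(N−1)). -/
/-- Regime 3 bound in the proof of the decentralized constant-gap theorem: for
`(N-1)/17 ≤ M - 1 ≤ N - 1`, the decentralized secure rate satisfies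
`R^D_s(M) ≤ 17 (1 - (M-1)/(N-1))`. -/
theorem regime3_upper_bound_decentralized (N K : ℕ) (hN : 2 ≤ N) (hK : 1 ≤ K) (M : ℝ)
    (hM1 : ((N : ℝ) - 1) / 17 ≤ M - 1) (hM2 : M - 1 ≤ (N : ℝ) - 1) :
    (K : ℝ) * (1 - (M - 1) / ((N : ℝ) - 1))
        * min ((((N : ℝ) - 1) / ((K : ℝ) * (M - 1)))
            * (1 - (1 - (M - 1) / ((N : ℝ) - 1)) ^ K)) 1
      ≤ 17 * (1 - (M - 1) / ((N : ℝ) - 1)) := by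
  have hN1 : (0 : ℝ) < (N : ℝ) - 1 := by
    have : (2 : ℝ) ≤ (N : ℝ) := by exact_mod_cast hN
    linarith
  have hK0 : (0 : ℝ) < (K : ℝ) := by exact_mod_cast hK
  have hM0 : (0 : ℝ) < M - 1 := lt_of_lt_of_le (by linarith) hM1
  set p : ℝ := (M - 1) / ((N : ℝ) - 1) with hp
  have hp0 : 0 < p := div_pos hM0 hN1
  have hp1 : p ≤ 1 := by
    rw [hp, div_le_one hN1]; exact hM2
  have hq0 : 0 ≤ 1 - p := by linarith
  have hq1 : (1 - p) ^ K ≥ 0 := pow_nonneg hq0 K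
  have hmin : min ((((N : ℝ) - 1) / ((K : ℝ) * (M - 1))) * (1 - (1 - p) ^ K)) 1
      ≤ (((N : ℝ) - 1) / ((K : ℝ) * (M - 1))) * (1 - (1 - p) ^ K) := min_le_left _ _
  have hKq : 0 ≤ (K : ℝ) * (1 - p) := mul_nonneg (le_of_lt hK0) hq0
  have step1 : (K : ℝ) * (1 - p)
        * min ((((N : ℝ) - 1) / ((K : ℝ) * (M - 1))) * (1 - (1 - p) ^ K)) 1
      ≤ (K : ℝ) * (1 - p) * ((((N : ℝ) - 1) / ((K : ℝ) * (M - 1))) * (1 - (1 - p) ^ K)) :=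
    mul_le_mul_of_nonneg_left hmin hKq
  have hKM : (0 : ℝ) < (K : ℝ) * (M - 1) := mul_pos hK0 hM0
  have hsimp : (K : ℝ) * (1 - p) * ((((N : ℝ) - 1) / ((K : ℝ) * (M - 1))) * (1 - (1 - p) ^ K))
      = (1 - p) * (1 / p) * (1 - (1 - p) ^ K) := by
    rw [hp]
    field_simp
  have hinvp : 1 / p ≤ 17 := by
    rw [div_le_iff₀ hp0]
    have : ((N : ℝ) - 1) / 17 ≤ M - 1 := hM1
    have h17 : (N : ℝ) - 1 ≤ 17 * (M - 1) := by linarith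
    rw [hp, ← mul_div_assoc, le_div_iff₀ hN1]
    linarith
  have hlast : (1 - p) * (1 / p) * (1 - (1 - p) ^ K) ≤ 17 * (1 - p) := by
    have h1 : (1 - p) * (1 / p) ≤ (1 - p) * 17 := by
      apply mul_le_mul_of_nonneg_left hinvp hq0
    have h2 : 1 - (1 - p) ^ K ≤ 1 := by linarith
    have h3 : 0 ≤ (1 - p) * (1 / p) := mul_nonneg hq0 (by positivity)
    calc (1 - p) * (1 / p) * (1 - (1 - p) ^ K) ≤ (1 - p) * (1 / p) * 1 :=
          mul_le_mul_of_nonneg_left h2 h3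
      _ = (1 - p) * (1 / p) := mul_one _
      _ ≤ (1 - p) * 17 := h1
      _ = 17 * (1 - p) := mul_comm _ _
  calc (K : ℝ) * (1 - p) * min ((((N : ℝ) - 1) / ((K : ℝ) * (M - 1))) * (1 - (1 - p) ^ K)) 1
      ≤ (1 - p) * (1 / p) * (1 - (1 - p) ^ K) := by rw [← hsimp]; exact step1
    _ ≤ 17 * (1 - p) := hlast
end
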